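/- arXiv:2402.01995 — 7 statements merged into one kernel-verified Lean document; each statement's English description precedes it below -/
import Mathlib

section
/- Let b > 0 and let η, T satisfy η = T/(e-1) with b < η and T ≤ b·e. Then for any β with η ≤ β ≤ T, the quantity (bβ/T)·ln(be/η) + (b/(e-1))·ln(η/b) + (bβ/T)·ln(η/b) − (b/T)(η − b) is at most b − (b/(e-1))·ln(e−1) + b/e. -/
open Real

lemma aux_mono (x y : ℝ) (hx : 1 ≤ x) (hxy : x ≤ y) :
    Real.log x + 1/x ≤ Real.log y + 1/y := by
  have hx0 : (0:ℝ) < x := by linarith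
  have hy0 : (0:ℝ) < y := by linarith
  have h1 : Real.log (x/y) ≤ x/y - 1 := Real.log_le_sub_one_of_pos (by positivity)
  have h2 : Real.log (x/y) = Real.log x - Real.log y :=
    Real.log_div (ne_of_gt hx0) (ne_of_gt hy0)
  have hnn : 0 ≤ (x-1)*(y-x) :=
    mul_nonneg (by linarith) (by linarith)
  have e1 : 1/y - 1/x - (x/y - 1) = (x-1)*(y-x)/(x*y) := by
    field_simp; ring
  have h4 : 0 ≤ (x-1)*(y-x)/(x*y) := div_nonneg hnn (mul_pos hx0 hy0).le
  have h5 : 0 ≤ 1/y - 1/x - (x/y - 1) := by rw [e1]; exact h4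
  linarith [h1, h2 ▸ h1]

theorem stmt_0 (b η T β : ℝ) (hb : 0 < b)
    (hη : η = T / (exp 1 - 1)) (hbη : b < η) (hT : T ≤ b * exp 1)
    (hβ1 : η ≤ β) (hβ2 : β ≤ T) :
    (b * β / T) * Real.log (b * exp 1 / η) + (b / (exp 1 - 1)) * Real.log (η / b)
      + (b * β / T) * Real.log (η / b) - (b / T) * (η - b)
      ≤ b - (b / (exp 1 - 1)) * Real.log (exp 1 - 1) + b / exp 1 := by
  have he : (1:ℝ) < exp 1 := by
    have := Real.exp_one_gt_d9; linarith
  have he1 : (0:ℝ) < exp 1 - 1 := by linarith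
  have he0 : (0:ℝ) < exp 1 := by linarith
  have hη0 : 0 < η := lt_trans hb hbη
  have hTη : T = η * (exp 1 - 1) := by
    rw [hη]; field_simp
  have hT0 : 0 < T := by rw [hTη]; positivity
  have hlog1 : Real.log (b * exp 1 / η) = Real.log b + 1 - Real.log η := by
    rw [Real.log_div (by positivity) (ne_of_gt hη0),
      Real.log_mul (ne_of_gt hb) (ne_of_gt he0), Real.log_exp]
  have hlog2 : Real.log (η / b) = Real.log η - Real.log b :=
    Real.log_div (ne_of_gt hη0) (ne_of_gt hb)
  -- x = η/b, y = exp 1/(exp 1 - 1)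
  have hx1 : 1 ≤ η / b := by
    rw [le_div_iff₀ hb]; linarith
  have hxy : η / b ≤ exp 1 / (exp 1 - 1) := by
    rw [div_le_div_iff₀ hb he1]
    nlinarith [hTη, hT]
  have key0 := aux_mono (η/b) (exp 1/(exp 1 - 1)) hx1 hxy
  have hly : Real.log (exp 1 / (exp 1 - 1)) = 1 - Real.log (exp 1 - 1) := by
    rw [Real.log_div (ne_of_gt he0) (ne_of_gt he1), Real.log_exp]
  have hiy : 1 / (exp 1 / (exp 1 - 1)) = (exp 1 - 1) / exp 1 := by
    rw [one_div_div]
  have hix : 1 / (η / b) = b / η := one_div_div η b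
  rw [hly, hiy, hix, hlog2] at key0
  -- key0 : log η - log b + b/η ≤ 1 - log (exp 1 - 1) + (exp 1 - 1)/exp 1
  have hA : (0:ℝ) < b / (exp 1 - 1) := div_pos hb he1
  have key' := mul_le_mul_of_nonneg_left key0 hA.le
  have hTeq : (b/T)*(η-b) = (b/(exp 1 - 1)) * (1 - b/η) := by
    rw [hTη]; field_simp [hη0.ne', he1.ne']
  have hbee : b/exp 1 = (b/(exp 1 - 1)) * ((exp 1 - 1)/exp 1) := by
    field_simp
  have h1 : b*β/T ≤ b := by
    rw [div_le_iff₀ hT0]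
    nlinarith [hβ2]
  have hmain : (b * β / T) * Real.log (b * exp 1 / η)
      + (b / (exp 1 - 1)) * Real.log (η / b)
      + (b * β / T) * Real.log (η / b) - (b / T) * (η - b)
      = b*β/T + ((b/(exp 1 - 1)) * (Real.log η - Real.log b) - (b/T)*(η-b)) := by
    rw [hlog1, hlog2]; ring
  rw [hmain, hTeq, hbee]
  nlinarith [key', h1]
end

section
/- Let b > 0, T ∈ (b(e−1), b·e], and set η = T/(e−1) > b. Then for every β ∈ [b, η], (b²/T)·ln(b·e·(e−1)/T) + b/(e−1) − b²/T ≥ (b/e)·ln(e−1) + b/(e(e−1)). -/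
open Real

theorem stmt_5 (b T η : ℝ) (hb : 0 < b)
    (hT1 : b * (exp 1 - 1) < T) (hT2 : T ≤ b * exp 1)
    (hη : η = T / (exp 1 - 1)) (hbη : b < η) :
    ∀ β : ℝ, b ≤ β → β ≤ η →
      (b ^ 2 / T) * Real.log (b * exp 1 * (exp 1 - 1) / T) + b / (exp 1 - 1) - b ^ 2 / T
        ≥ (b / exp 1) * Real.log (exp 1 - 1) + b / (exp 1 * (exp 1 - 1)) := by
  intro β hβ1 hβ2
  have he2 : (2 : ℝ) < exp 1 := by nlinarith [Real.exp_one_gt_d9]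
  have he0 : (0 : ℝ) < exp 1 := by linarith
  have hc0 : (0 : ℝ) < exp 1 - 1 := by linarith
  have hT0 : 0 < T := lt_trans (by positivity) hT1
  set t : ℝ := T / b with ht
  have ht0 : 0 < t := by positivity
  have ht1 : exp 1 - 1 < t := by
    rw [ht, lt_div_iff₀ hb]; nlinarith
  have ht2 : t ≤ exp 1 := by
    rw [ht, div_le_iff₀ hb]; nlinarith
  have hTbt : T = b * t := by rw [ht]; field_simp
  -- log t ≤ t / e
  have hlogt : exp 1 * Real.log t ≤ t := by
    have h1 : Real.log (t / exp 1) ≤ t / exp 1 - 1 :=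
      Real.log_le_sub_one_of_pos (by positivity)
    rw [Real.log_div (ne_of_gt ht0) (ne_of_gt he0), Real.log_exp] at h1
    calc exp 1 * Real.log t ≤ exp 1 * (t / exp 1) := by
          have h2 : Real.log t ≤ t / exp 1 := by linarith
          exact mul_le_mul_of_nonneg_left h2 he0.le
      _ = t := by field_simp
  have hL1 : (0:ℝ) ≤ Real.log (exp 1 - 1) := Real.log_nonneg (by linarith)
  have key : 0 ≤ (exp 1 - t) * Real.log (exp 1 - 1) + t - exp 1 * Real.log t := by
    nlinarith [mul_nonneg (sub_nonneg.mpr ht2) hL1]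
  have hlog : Real.log (b * exp 1 * (exp 1 - 1) / T)
      = Real.log (exp 1 - 1) - Real.log t + 1 := by
    have harg : b * exp 1 * (exp 1 - 1) / T = exp 1 * (exp 1 - 1) / t := by
      rw [hTbt]; field_simp
    rw [harg, Real.log_div (by positivity) (ne_of_gt ht0),
      Real.log_mul (ne_of_gt he0) (ne_of_gt hc0), Real.log_exp]
    ring
  have hbT : b ^ 2 / T = b / t := by rw [hTbt]; field_simp
  rw [hlog, hbT, ge_iff_le, ← sub_nonneg]
  have hdiff : (b / t) * (Real.log (exp 1 - 1) - Real.log t + 1) + b / (exp 1 - 1) - b / t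
      - ((b / exp 1) * Real.log (exp 1 - 1) + b / (exp 1 * (exp 1 - 1)))
      = (b * (exp 1 - 1) * ((exp 1 - t) * Real.log (exp 1 - 1) + t - exp 1 * Real.log t))
        / (t * exp 1 * (exp 1 - 1)) := by
    field_simp
    ring
  rw [hdiff]
  positivity
end

section
/- For real b > 0 and L, U with b < U − L ≤ b(e−1), L ≥ b, and τ* with L ≤ τ* < L + b: (bτ*/L)·(ln((U−L)/b) − ln(U/(L+b))) + (bτ*/U)·ln(be/(U−L)) ≥ b·(ln(2(e−1)/e) + (1/e)·ln(e/(e−1))). -/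
open Real

private noncomputable def hfun (s l : ℝ) : ℝ :=
  Real.log (l + 1) - Real.log (l + s) + l / (l + s) * (1 - Real.log s)

private lemma hfun_hasDerivAt (s l : ℝ) (hs : 0 < s) (hl : 0 < l) :
    HasDerivAt (hfun s)
      (1 / (l + 1) - 1 / (l + s) + (1 * (l + s) - l * 1) / (l + s) ^ 2 * (1 - Real.log s)) l := by
  have h1 : (0:ℝ) < l + 1 := by linarith
  have h2 : (0:ℝ) < l + s := by linarith
  have d1 : HasDerivAt (fun l : ℝ => l + 1) 1 l := (hasDerivAt_id l).add_const 1
  have d2 : HasDerivAt (fun l : ℝ => l + s) 1 l := (hasDerivAt_id l).add_const s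
  have dl1 : HasDerivAt (fun l : ℝ => Real.log (l + 1)) (1 / (l + 1)) l := d1.log h1.ne'
  have dl2 : HasDerivAt (fun l : ℝ => Real.log (l + s)) (1 / (l + s)) l := d2.log h2.ne'
  have dq : HasDerivAt (fun l : ℝ => l / (l + s))
      ((1 * (l + s) - l * 1) / (l + s) ^ 2) l := (hasDerivAt_id l).div d2 h2.ne'
  exact (dl1.sub dl2).add (dq.mul_const (1 - Real.log s))

private lemma hfun_mono (s : ℝ) (hs1 : 1 < s) (hs2 : Real.log s ≤ 1) :
    MonotoneOn (hfun s) (Set.Ici 1) := by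
  have hs0 : (0:ℝ) < s := by linarith
  apply monotoneOn_of_deriv_nonneg (convex_Ici 1)
  · intro l hl
    have hl0 : (0:ℝ) < l := lt_of_lt_of_le one_pos hl
    exact (hfun_hasDerivAt s l hs0 hl0).differentiableAt.continuousAt.continuousWithinAt
  · intro l hl
    rw [interior_Ici] at hl
    have hl0 : (0:ℝ) < l := lt_trans one_pos hl
    exact (hfun_hasDerivAt s l hs0 hl0).differentiableAt.differentiableWithinAt
  · intro l hl
    rw [interior_Ici] at hl
    have hl0 : (0:ℝ) < l := lt_trans one_pos hl
    rw [(hfun_hasDerivAt s l hs0 hl0).deriv]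
    have h1 : (0:ℝ) < l + 1 := by linarith
    have h2 : (0:ℝ) < l + s := by linarith
    have e1 : 1 / (l + 1) - 1 / (l + s) = (s - 1) / ((l + 1) * (l + s)) := by
      field_simp; ring
    rw [e1]
    have t1 : 0 ≤ (s - 1) / ((l + 1) * (l + s)) := by
      apply div_nonneg (by linarith) (by positivity)
    have t2 : 0 ≤ (1 * (l + s) - l * 1) / (l + s) ^ 2 * (1 - Real.log s) := by
      have : (1 * (l + s) - l * 1) = s := by ring
      rw [this]
      have : 0 ≤ 1 - Real.log s := by linarith
      positivity
    linarith

private noncomputable def Gfun (s : ℝ) : ℝ :=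
  Real.log s + Real.log 2 - Real.log (1 + s) + (1 - Real.log s) / (1 + s)

private lemma Gfun_hasDerivAt (s : ℝ) (hs : 0 < s) :
    HasDerivAt Gfun
      (1 / s - 1 / (1 + s) + ((-(1 / s)) * (1 + s) - (1 - Real.log s) * 1) / (1 + s) ^ 2) s := by
  have h1 : (0:ℝ) < 1 + s := by linarith
  have dls : HasDerivAt (fun s : ℝ => Real.log s) (1 / s) s := by
    simpa using (hasDerivAt_id s).log hs.ne'
  have d1 : HasDerivAt (fun s : ℝ => 1 + s) 1 s := (hasDerivAt_id s).const_add 1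
  have dl1 : HasDerivAt (fun s : ℝ => Real.log (1 + s)) (1 / (1 + s)) s := d1.log h1.ne'
  have dn : HasDerivAt (fun s : ℝ => 1 - Real.log s) (-(1 / s)) s := dls.const_sub 1
  have dq : HasDerivAt (fun s : ℝ => (1 - Real.log s) / (1 + s))
      (((-(1 / s)) * (1 + s) - (1 - Real.log s) * 1) / (1 + s) ^ 2) s := dn.div d1 h1.ne'
  exact ((dls.add_const (Real.log 2)).sub dl1).add dq

private lemma Gfun_anti : AntitoneOn Gfun (Set.Icc 1 (exp 1 - 1)) := by
  apply antitoneOn_of_deriv_nonpos (convex_Icc 1 (exp 1 - 1))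
  · intro s hs
    have hs0 : (0:ℝ) < s := lt_of_lt_of_le one_pos hs.1
    exact (Gfun_hasDerivAt s hs0).differentiableAt.continuousAt.continuousWithinAt
  · intro s hs
    rw [interior_Icc] at hs
    have hs0 : (0:ℝ) < s := lt_trans one_pos hs.1
    exact (Gfun_hasDerivAt s hs0).differentiableAt.differentiableWithinAt
  · intro s hs
    rw [interior_Icc] at hs
    have hs0 : (0:ℝ) < s := lt_trans one_pos hs.1
    rw [(Gfun_hasDerivAt s hs0).deriv]
    have h1 : (0:ℝ) < 1 + s := by linarith
    have he : s < exp 1 := by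
      have := Real.exp_one_gt_d9
      have := hs.2
      nlinarith
    have hlog : Real.log s < 1 := by
      calc Real.log s < Real.log (exp 1) := Real.log_lt_log hs0 he
        _ = 1 := Real.log_exp 1
    have e1 : 1 / s - 1 / (1 + s) + ((-(1 / s)) * (1 + s) - (1 - Real.log s) * 1) / (1 + s) ^ 2
        = -((1 - Real.log s) / (1 + s) ^ 2) := by
      field_simp; ring
    rw [e1]
    have : 0 ≤ (1 - Real.log s) / (1 + s) ^ 2 := by
      have : 0 ≤ 1 - Real.log s := by linarith
      positivity
    linarith

private lemma key (l s : ℝ) (hl : 1 ≤ l) (hs1 : 1 < s) (hs2 : s ≤ exp 1 - 1) :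
    Real.log s + Real.log (l + 1) - Real.log (l + s) + l / (l + s) * (1 - Real.log s)
      ≥ Real.log (2 * (exp 1 - 1) / exp 1)
        + (1 / exp 1) * Real.log (exp 1 / (exp 1 - 1)) := by
  have he1 : (1:ℝ) < exp 1 - 1 := by
    have := Real.exp_one_gt_d9; nlinarith
  have he0 : (0:ℝ) < exp 1 - 1 := by linarith
  have hs0 : (0:ℝ) < s := by linarith
  have hlog1 : Real.log s ≤ 1 := by
    have : Real.log s ≤ Real.log (exp 1) := Real.log_le_log hs0 (by nlinarith [Real.exp_pos 1])
    simpa [Real.log_exp] using this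
  -- step 1: hfun s 1 ≤ hfun s l
  have step1 : hfun s 1 ≤ hfun s l :=
    hfun_mono s hs1 hlog1 (Set.self_mem_Ici) (Set.mem_Ici.mpr hl) hl
  -- step 2: Gfun (exp 1 - 1) ≤ Gfun s
  have step2 : Gfun (exp 1 - 1) ≤ Gfun s :=
    Gfun_anti (Set.mem_Icc.mpr ⟨hs1.le, hs2⟩) (Set.mem_Icc.mpr ⟨he1.le, le_refl _⟩) hs2
  have hGs : Gfun s = Real.log s + hfun s 1 := by
    unfold Gfun hfun
    rw [one_add_one_eq_two]
    ring
  -- value at the corner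
  have hval : Gfun (exp 1 - 1) = Real.log (2 * (exp 1 - 1) / exp 1)
      + (1 / exp 1) * Real.log (exp 1 / (exp 1 - 1)) := by
    unfold Gfun
    have hee : (0:ℝ) < exp 1 := Real.exp_pos 1
    have h2 : (2:ℝ) * (exp 1 - 1) ≠ 0 := by positivity
    rw [Real.log_div h2 hee.ne', Real.log_div hee.ne' he0.ne',
      Real.log_mul (by norm_num) he0.ne', Real.log_exp]
    have : (1:ℝ) + (exp 1 - 1) = exp 1 := by ring
    rw [this, Real.log_exp]
    field_simp
    ring
  have : Real.log s + hfun s l ≥ Gfun (exp 1 - 1) := by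
    calc Real.log s + hfun s l ≥ Real.log s + hfun s 1 := by linarith
      _ = Gfun s := hGs.symm
      _ ≥ Gfun (exp 1 - 1) := step2
  unfold hfun at this
  rw [hval] at this
  linarith

theorem stmt_10 (b L U τ : ℝ) (hb : 0 < b) (hL : b ≤ L)
    (hUL1 : b < U - L) (hUL2 : U - L ≤ b * (exp 1 - 1))
    (hτ1 : L ≤ τ) (hτ2 : τ < L + b) :
    (b * τ / L) * (Real.log ((U - L) / b) - Real.log (U / (L + b)))
        + (b * τ / U) * Real.log (b * exp 1 / (U - L))
      ≥ b * (Real.log (2 * (exp 1 - 1) / exp 1)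
          + (1 / exp 1) * Real.log (exp 1 / (exp 1 - 1))) := by
  have hL0 : (0:ℝ) < L := lt_of_lt_of_le hb hL
  have hU0 : (0:ℝ) < U := by linarith
  have hLb : (0:ℝ) < L + b := by linarith
  have hULpos : (0:ℝ) < U - L := by linarith
  set l : ℝ := L / b with hl_def
  set s : ℝ := (U - L) / b with hs_def
  have hl1 : 1 ≤ l := (one_le_div hb).mpr hL
  have hs1 : 1 < s := (one_lt_div hb).mpr hUL1
  have hs2 : s ≤ exp 1 - 1 := by
    rw [hs_def, div_le_iff₀ hb]; linarith [hUL2]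
  have hs0 : (0:ℝ) < s := by linarith
  have hl0 : (0:ℝ) < l := by linarith
  have hls : l + s = U / b := by rw [hl_def, hs_def, ← add_div]; ring_nf
  have hl1' : l + 1 = (L + b) / b := by rw [hl_def]; field_simp
  -- rewrite the two log expressions
  have hA : Real.log ((U - L) / b) - Real.log (U / (L + b))
      = Real.log s + Real.log (l + 1) - Real.log (l + s) := by
    rw [hls, hl1', Real.log_div hU0.ne' hb.ne', Real.log_div hLb.ne' hb.ne',
      Real.log_div hU0.ne' hLb.ne']
    ring
  have hB : Real.log (b * exp 1 / (U - L)) = 1 - Real.log s := by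
    have hbe : (0:ℝ) < b * exp 1 := by positivity
    rw [hs_def, Real.log_div hbe.ne' hULpos.ne', Real.log_mul hb.ne' (Real.exp_pos 1).ne',
      Real.log_exp, Real.log_div hULpos.ne' hb.ne']
    ring
  rw [hA, hB]
  -- nonnegativity of the two log terms
  have hAnn : 0 ≤ Real.log s + Real.log (l + 1) - Real.log (l + s) := by
    have h1 : Real.log (l + s) ≤ Real.log (s * (l + 1)) := by
      apply Real.log_le_log (by linarith)
      nlinarith
    rw [Real.log_mul hs0.ne' (by linarith : (l:ℝ) + 1 ≠ 0)] at h1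
    linarith
  have hBnn : 0 ≤ 1 - Real.log s := by
    have : Real.log s ≤ Real.log (exp 1) :=
      Real.log_le_log hs0 (by nlinarith [Real.exp_pos 1])
    simpa [Real.log_exp] using this
  -- coefficient bounds
  have hc1 : b ≤ b * τ / L := by
    rw [le_div_iff₀ hL0]; nlinarith
  have hc2 : b * L / U ≤ b * τ / U := by
    gcongr
  have hLU : l / (l + s) = L / U := by
    rw [hls, hl_def]
    field_simp
  have hkey := key l s hl1 hs1 hs2
  have t1 : b * (Real.log s + Real.log (l + 1) - Real.log (l + s))
      ≤ (b * τ / L) * (Real.log s + Real.log (l + 1) - Real.log (l + s)) :=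
    mul_le_mul_of_nonneg_right hc1 hAnn
  have t2 : (b * L / U) * (1 - Real.log s) ≤ (b * τ / U) * (1 - Real.log s) :=
    mul_le_mul_of_nonneg_right hc2 hBnn
  have hmid : b * (Real.log s + Real.log (l + 1) - Real.log (l + s))
      + (b * L / U) * (1 - Real.log s)
      = b * (Real.log s + Real.log (l + 1) - Real.log (l + s)
          + l / (l + s) * (1 - Real.log s)) := by
    rw [hLU]; ring
  have hfin : b * (Real.log (2 * (exp 1 - 1) / exp 1)
        + (1 / exp 1) * Real.log (exp 1 / (exp 1 - 1)))
      ≤ b * (Real.log s + Real.log (l + 1) - Real.log (l + s)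
          + l / (l + s) * (1 - Real.log s)) :=
    mul_le_mul_of_nonneg_left hkey hb.le
  linarith
end

section
/- Let b > 0, L ≥ b, and U = L + b·e·(e−1) arbitrary with τ* satisfying L ≤ τ* < L + b. Then (bτ*/L)·(1 − ln((L + be(e−1))/(L + b(e−1)))) ≥ b·(2 − ln(e² − e + 1)), with the minimum over L attained at L = b. -/
open Real

/-! The ratio `(L + b e (e - 1)) / (L + b (e - 1))` is largest at `L = b`, where it equals
`(e² - e + 1) / e`; this bounds the logarithmic factor below by `2 - log (e² - e + 1) > 0`,
and the prefactor `b τ / L` is at least `b` because `τ ≥ L`. -/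

lemma ratio_le_sq_sub_add_one_div {b L x : ℝ} (hb : 0 < b) (hL : b ≤ L) (hx : 0 < x) :
    (L + b * x * (x - 1)) / (L + b * (x - 1)) ≤ (x ^ 2 - x + 1) / x := by
  have hden : 0 < L + b * (x - 1) := by nlinarith
  rw [div_le_div_iff₀ hden hx]
  have key : (x ^ 2 - x + 1) * (L + b * (x - 1)) - (L + b * x * (x - 1)) * x
      = (L - b) * (x - 1) ^ 2 := by ring
  linarith [mul_nonneg (sub_nonneg.2 hL) (sq_nonneg (x - 1))]

lemma log_ratio_le {b L : ℝ} (hb : 0 < b) (hL : b ≤ L) :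
    log ((L + b * exp 1 * (exp 1 - 1)) / (L + b * (exp 1 - 1)))
      ≤ log (exp 1 ^ 2 - exp 1 + 1) - 1 := by
  have he : 1 < exp 1 := one_lt_exp_iff.2 one_pos
  have hden : 0 < L + b * (exp 1 - 1) := by nlinarith
  have hnum : 0 < L + b * exp 1 * (exp 1 - 1) := by
    have := sub_pos.2 he
    have := hb.trans_le hL
    positivity
  have h := log_le_log (by positivity) (ratio_le_sq_sub_add_one_div hb hL (exp_pos 1))
  rwa [log_div (by nlinarith) (exp_ne_zero 1), log_exp] at h

lemma log_sq_sub_exp_add_one_lt_two : log (exp 1 ^ 2 - exp 1 + 1) < 2 := by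
  have he : 1 < exp 1 := one_lt_exp_iff.2 one_pos
  calc log (exp 1 ^ 2 - exp 1 + 1) < log (exp 1 ^ 2) := log_lt_log (by nlinarith) (by linarith)
    _ = 2 := by rw [log_pow, log_exp]; norm_num

theorem stmt_13_general (b L τ : ℝ) (hb : 0 < b) (hL : b ≤ L)
    (hτ1 : L ≤ τ) :
    (b * τ / L) *
        (1 - Real.log ((L + b * exp 1 * (exp 1 - 1)) / (L + b * (exp 1 - 1))))
      ≥ b * (2 - Real.log (exp 1 ^ 2 - exp 1 + 1)) := by
  have hfactor := log_ratio_le hb hL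
  have hlog_lt_two := log_sq_sub_exp_add_one_lt_two
  have hprefactor : b ≤ b * τ / L := by
    rw [le_div_iff₀ (hb.trans_le hL)]
    exact mul_le_mul_of_nonneg_left hτ1 hb.le
  calc b * (2 - log (exp 1 ^ 2 - exp 1 + 1))
      ≤ b * (1 - log ((L + b * exp 1 * (exp 1 - 1)) / (L + b * (exp 1 - 1)))) :=
        mul_le_mul_of_nonneg_left (by linarith) hb.le
    _ ≤ (b * τ / L) * (1 - log ((L + b * exp 1 * (exp 1 - 1)) / (L + b * (exp 1 - 1)))) :=
        mul_le_mul_of_nonneg_right hprefactor (by linarith)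

theorem stmt_13 (b L U τ : ℝ) (hb : 0 < b) (hL : b ≤ L)
    (hU : U = L + b * exp 1 * (exp 1 - 1))
    (hτ1 : L ≤ τ) (hτ2 : τ < L + b) :
    (b * τ / L) *
        (1 - Real.log ((L + b * exp 1 * (exp 1 - 1)) / (L + b * (exp 1 - 1))))
      ≥ b * (2 - Real.log (exp 1 ^ 2 - exp 1 + 1)) :=
  stmt_13_general b L τ hb hL hτ1
end

section
/- For b > 0 and β ∈ [b, be]: ∫_β^{be} (β/(α(e−1)))·(1/α) dα + ∫_b^β (1/(e−1) + (β − α)/(αe(e−1)))·(1/α) dα = 1/e + (1/e)·ln(β/b). -/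
open Real

theorem stmt_16 (b β : ℝ) (hb : 0 < b) (hβ1 : b ≤ β) (hβ2 : β ≤ b * exp 1) :
    (∫ α in β..(b * exp 1), (β / (α * (exp 1 - 1))) * (1 / α))
      + (∫ α in b..β,
          (1 / (exp 1 - 1) + (β - α) / (α * exp 1 * (exp 1 - 1))) * (1 / α))
      = 1 / exp 1 + (1 / exp 1) * Real.log (β / b) := by
  have he : (1:ℝ) < exp 1 := by
    have := exp_one_gt_d9; linarith
  have he0 : exp 1 - 1 ≠ 0 := by linarith
  have hβ0 : 0 < β := lt_of_lt_of_le hb hβ1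
  have hbe : 0 < b * exp 1 := by positivity
  -- first integral
  have h1 : (∫ α in β..(b * exp 1), (β / (α * (exp 1 - 1))) * (1 / α))
      = (-(β/(exp 1 - 1))/(b * exp 1)) - (-(β/(exp 1 - 1))/β) := by
    apply intervalIntegral.integral_eq_sub_of_hasDerivAt
    · intro x hx
      have hx0 : 0 < x := by
        rcases Set.mem_uIcc.mp hx with h | h
        · linarith [h.1]
        · linarith [h.1, hβ2]
      have h' : HasDerivAt (fun α : ℝ => (-(β/(exp 1 - 1))) * α⁻¹)
          ((-(β/(exp 1 - 1))) * (-(x^2)⁻¹)) x :=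
        (hasDerivAt_inv hx0.ne').const_mul _
      refine h'.congr_deriv ?_; symm
      rw [div_mul_div_comm, neg_mul_neg, mul_one, ← div_eq_mul_inv, div_div]
      ring_nf
    · apply ContinuousOn.intervalIntegrable
      apply ContinuousOn.mul
      · apply ContinuousOn.div continuousOn_const
        · exact (continuousOn_id.mul continuousOn_const)
        · intro x hx
          have hx0 : 0 < x := by
            rcases Set.mem_uIcc.mp hx with h | h
            · linarith [h.1]
            · linarith [h.1, hβ2]
          positivity
      · apply ContinuousOn.div continuousOn_const continuousOn_id
        intro x hx
        rcases Set.mem_uIcc.mp hx with h | h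
        · intro h0; simp only [id_eq] at h0; rw [h0] at h; linarith [h.1]
        · intro h0; simp only [id_eq] at h0; rw [h0] at h; linarith [h.1, hβ2]
  -- second integral
  have h2 : (∫ α in b..β,
          (1 / (exp 1 - 1) + (β - α) / (α * exp 1 * (exp 1 - 1))) * (1 / α))
      = ((1/exp 1) * Real.log β + (-(β/(exp 1 * (exp 1 - 1)))) * β⁻¹)
        - ((1/exp 1) * Real.log b + (-(β/(exp 1 * (exp 1 - 1)))) * b⁻¹) := by
    apply intervalIntegral.integral_eq_sub_of_hasDerivAt
      (f := fun α : ℝ => (1/exp 1) * Real.log α + (-(β/(exp 1 * (exp 1 - 1)))) * α⁻¹)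
    · intro x hx
      have hx0 : 0 < x := by
        rcases Set.mem_uIcc.mp hx with h | h
        · linarith [h.1]
        · linarith [h.1]
      have hlog : HasDerivAt (fun α : ℝ => (1/exp 1) * Real.log α)
          ((1/exp 1) * x⁻¹) x := (hasDerivAt_log hx0.ne').const_mul _
      have hinv : HasDerivAt (fun α : ℝ => (-(β/(exp 1 * (exp 1 - 1)))) * α⁻¹)
          ((-(β/(exp 1 * (exp 1 - 1)))) * (-(x^2)⁻¹)) x :=
        (hasDerivAt_inv hx0.ne').const_mul _
      have h' := hlog.add hinv
      refine h'.congr_deriv ?_; symm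
      have hexp : (0:ℝ) < exp 1 := exp_pos 1
      field_simp
      try ring
    · apply ContinuousOn.intervalIntegrable
      have hne : ∀ x ∈ Set.uIcc b β, x ≠ 0 := by
        intro x hx
        rcases Set.mem_uIcc.mp hx with h | h
        · intro h0; rw [h0] at h; linarith [h.1]
        · intro h0; rw [h0] at h; linarith [h.1]
      apply ContinuousOn.mul
      · apply ContinuousOn.add continuousOn_const
        apply ContinuousOn.div (continuousOn_const.sub continuousOn_id)
        · exact (continuousOn_id.mul continuousOn_const).mul continuousOn_const
        · intro x hx
          exact mul_ne_zero (mul_ne_zero (hne x hx) (exp_ne_zero 1)) he0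
      · exact ContinuousOn.div continuousOn_const continuousOn_id hne
  rw [h1, h2]
  have hlog : Real.log (β / b) = Real.log β - Real.log b :=
    Real.log_div hβ0.ne' hb.ne'
  rw [hlog]
  have hexp : (0:ℝ) < exp 1 := exp_pos 1
  field_simp
  ring
end

section
/- For b > 0 and β ∈ [b, be]: ∫_β^{be} (β/(eα))·(1/α) dα + ∫_b^β (1/e + (β − α)/(e²α))·(1/α) dα = b-normalized value (1/e) − (1/e²) + ((1/e) − (1/e²))·ln(β/b); equivalently the integral equals (1/e − 1/e²)(1 + ln(β/b)). -/
open Real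

theorem stmt_17 (b β : ℝ) (hb : 0 < b) (hβ1 : b ≤ β) (hβ2 : β ≤ b * exp 1) :
    (∫ α in β..(b * exp 1), (β / (exp 1 * α)) * (1 / α))
      + (∫ α in b..β, (1 / exp 1 + (β - α) / (exp 1 ^ 2 * α)) * (1 / α))
      = (1 / exp 1 - 1 / exp 1 ^ 2) * (1 + Real.log (β / b)) := by
  have he : (0:ℝ) < exp 1 := exp_pos 1
  have hβ : 0 < β := lt_of_lt_of_le hb hβ1
  have hbe : 0 < b * exp 1 := mul_pos hb he
  set F1 : ℝ → ℝ := fun α => -(β / exp 1) * α⁻¹ with hF1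
  set F2 : ℝ → ℝ := fun α =>
    (1 / exp 1) * Real.log α + (1 / exp 1 ^ 2) * (-β * α⁻¹ - Real.log α) with hF2
  have hpos1 : ∀ x ∈ Set.uIcc β (b * exp 1), 0 < x := by
    intro x hx
    rcases Set.mem_uIcc.1 hx with ⟨h, _⟩ | ⟨h, _⟩ <;> linarith
  have hpos2 : ∀ x ∈ Set.uIcc b β, 0 < x := by
    intro x hx
    rcases Set.mem_uIcc.1 hx with ⟨h, _⟩ | ⟨h, _⟩ <;> linarith
  have hd1 : ∀ x ∈ Set.uIcc β (b * exp 1),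
      HasDerivAt F1 ((β / (exp 1 * x)) * (1 / x)) x := by
    intro x hx
    have hx0 := hpos1 x hx
    have h := (hasDerivAt_inv hx0.ne').const_mul (-(β / exp 1))
    have heq : (β / (exp 1 * x)) * (1 / x) = -(β / exp 1) * -(x ^ 2)⁻¹ := by
      rw [neg_mul_neg, div_mul_div_comm, mul_one, sq, mul_inv]
      simp [div_eq_mul_inv, mul_inv, mul_assoc]
      left; ring
    rw [heq]; exact h
  have hd2 : ∀ x ∈ Set.uIcc b β,
      HasDerivAt F2 ((1 / exp 1 + (β - x) / (exp 1 ^ 2 * x)) * (1 / x)) x := by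
    intro x hx
    have hx0 := hpos2 x hx
    have h1 := (Real.hasDerivAt_log hx0.ne').const_mul (1 / exp 1)
    have h2 := (((hasDerivAt_inv hx0.ne').const_mul (-β)).sub
      (Real.hasDerivAt_log hx0.ne')).const_mul (1 / exp 1 ^ 2)
    have h := h1.add h2
    have heq : (1 / exp 1 + (β - x) / (exp 1 ^ 2 * x)) * (1 / x)
        = 1 / exp 1 * x⁻¹ + 1 / exp 1 ^ 2 * (-β * -(x ^ 2)⁻¹ - x⁻¹) := by
      field_simp
    rw [heq]; exact h
  have hc1 : IntervalIntegrable (fun α => (β / (exp 1 * α)) * (1 / α))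
      MeasureTheory.volume β (b * exp 1) := by
    apply ContinuousOn.intervalIntegrable
    intro x hx
    have hx0 := hpos1 x hx
    exact ((continuousAt_const.div (continuousAt_const.mul continuousAt_id)
      (mul_pos he hx0).ne').mul
      (continuousAt_const.div continuousAt_id hx0.ne')).continuousWithinAt
  have hc2 : IntervalIntegrable (fun α => (1 / exp 1 + (β - α) / (exp 1 ^ 2 * α)) * (1 / α))
      MeasureTheory.volume b β := by
    apply ContinuousOn.intervalIntegrable
    intro x hx
    have hx0 := hpos2 x hx
    exact ((continuousAt_const.add
      ((continuousAt_const.sub continuousAt_id).div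
        (continuousAt_const.mul continuousAt_id) (mul_pos (pow_pos he 2) hx0).ne')).mul
      (continuousAt_const.div continuousAt_id hx0.ne')).continuousWithinAt
  rw [intervalIntegral.integral_eq_sub_of_hasDerivAt hd1 hc1,
      intervalIntegral.integral_eq_sub_of_hasDerivAt hd2 hc2]
  simp only [hF1, hF2]
  rw [Real.log_div hβ.ne' hb.ne']
  have hE0 : exp 1 ≠ 0 := he.ne'
  generalize exp 1 = E at *
  field_simp
  ring
end

section
/- For all b > 0, β ∈ [b, be], integer j ≥ 1, and σ satisfying 0 ≤ σ·ln(e^{2j−1}/(e−1)^{j−1}) ≤ b(1−1/e)^j·(e−2)/(e(e−1)): b − b(1−1/e)^j·[ln(be/β) + (1−1/e)·ln(β/b)] + (b(e−1)^{j−1}/e^{j+1})·[e − β/b − ln(be/β) + ((e−1)/e)(β/b − 1 − ln(β/b))] ≥ b − b(1−1/e)^j + b(1−1/e)^j·(e−2)/(e(e−1)) − σ·ln(e^{2j−1}/(e−1)^{j−1}), and this right-hand side is at least b(1/e − 1/e²) − σ·ln(e^{2j−1}/(e−1)^{j−1}). -/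
open Real

set_option maxHeartbeats 1000000 in
theorem stmt_19 (b β σ : ℝ) (j : ℕ) (hb : 0 < b) (hβ1 : b ≤ β) (hβ2 : β ≤ b * exp 1)
    (hj : 1 ≤ j)
    (hσ0 : 0 ≤ σ * Real.log (exp 1 ^ (2 * j - 1) / (exp 1 - 1) ^ (j - 1)))
    (hσ : σ * Real.log (exp 1 ^ (2 * j - 1) / (exp 1 - 1) ^ (j - 1))
        ≤ b * (1 - 1 / exp 1) ^ j * ((exp 1 - 2) / (exp 1 * (exp 1 - 1)))) :
    (b - b * (1 - 1 / exp 1) ^ j *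
          (Real.log (b * exp 1 / β) + (1 - 1 / exp 1) * Real.log (β / b))
        + (b * (exp 1 - 1) ^ (j - 1) / exp 1 ^ (j + 1)) *
          (exp 1 - β / b - Real.log (b * exp 1 / β)
            + ((exp 1 - 1) / exp 1) * (β / b - 1 - Real.log (β / b)))
      ≥ b - b * (1 - 1 / exp 1) ^ j
          + b * (1 - 1 / exp 1) ^ j * ((exp 1 - 2) / (exp 1 * (exp 1 - 1)))
          - σ * Real.log (exp 1 ^ (2 * j - 1) / (exp 1 - 1) ^ (j - 1))) ∧
    (b - b * (1 - 1 / exp 1) ^ j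
        + b * (1 - 1 / exp 1) ^ j * ((exp 1 - 2) / (exp 1 * (exp 1 - 1)))
        - σ * Real.log (exp 1 ^ (2 * j - 1) / (exp 1 - 1) ^ (j - 1))
      ≥ b * (1 / exp 1 - 1 / exp 1 ^ 2)
          - σ * Real.log (exp 1 ^ (2 * j - 1) / (exp 1 - 1) ^ (j - 1))) := by
  obtain ⟨m, rfl⟩ : ∃ m, j = m + 1 := ⟨j - 1, (Nat.succ_pred_eq_of_pos hj).symm⟩
  simp only [Nat.add_sub_cancel] at hσ0 hσ ⊢
  have hE0 : (0:ℝ) < exp 1 := exp_pos 1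
  have hE2 : (2:ℝ) < exp 1 := by
    have := Real.exp_one_gt_d9; linarith
  set E := exp 1 with hEdef
  have hβ0 : 0 < β := lt_of_lt_of_le hb hβ1
  -- simplify index arithmetic
  have hj1 : m + 1 - 1 = m := rfl
  have hE1 : (1:ℝ) < E := by linarith
  have hEne : E ≠ 0 := ne_of_gt hE0
  have hE1ne : E - 1 ≠ 0 := by linarith
  set T := β / b with hT
  set L := Real.log (β / b) with hLdef
  have ht1 : 1 ≤ T := (one_le_div hb).mpr hβ1
  have ht2 : T ≤ E := (div_le_iff₀ hb).mpr (by linarith)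
  have hlogbe : Real.log (b * E / β) = 1 - L := by
    rw [hLdef, Real.log_div (mul_ne_zero hb.ne' hEne) hβ0.ne',
      Real.log_mul hb.ne' hEne, hEdef, Real.log_exp,
      Real.log_div hβ0.ne' hb.ne']
    ring
  -- lower bound on log
  have hLlb : 1 - b / β ≤ L := by
    have h := Real.log_le_sub_one_of_pos (div_pos hb hβ0)
    rw [hLdef, Real.log_div hβ0.ne' hb.ne']
    rw [Real.log_div hb.ne' hβ0.ne'] at h
    linarith
  have hTi : T * (b / β) = 1 := by
    rw [hT]; field_simp
  have hTipos : 0 < b / β := div_pos hb hβ0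
  have hg : 0 ≤ (E ^ 2 - E + 1) * L - T + 1 := by
    nlinarith [mul_nonneg (sub_nonneg.mpr ht2) (sub_nonneg.mpr hLlb),
      mul_nonneg (sub_nonneg.mpr ht1) (sub_nonneg.mpr hLlb),
      sq_nonneg (E - 1), mul_pos hb hβ0, hTipos]
  set S := σ * Real.log (E ^ (2 * (m + 1) - 1) / (E - 1) ^ (m + 1 - 1)) with hS
  set P := (E - 1) ^ m with hP
  set Q := E ^ m with hQ
  have hQ0 : 0 < Q := pow_pos hE0 m
  have hP0 : 0 < P := pow_pos (by linarith) m
  have hPQ : (1 - 1 / E) ^ m = P / Q := by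
    rw [hP, hQ, ← div_pow]
    congr 1
    field_simp
  have hpow1 : (1 - 1 / E) ^ (m + 1) = (1 - 1 / E) * (P / Q) := by
    rw [pow_succ, hPQ]; ring
  have hEpow : E ^ (m + 1 + 1) = Q * E ^ 2 := by
    rw [hQ, ← pow_add]
  have key : b - b * (1 - 1 / E) ^ (m + 1) * ((1 - L) + (1 - 1 / E) * L)
        + (b * P / E ^ (m + 1 + 1)) *
          (E - T - (1 - L) + ((E - 1) / E) * (T - 1 - L))
      = b - b * (1 - 1 / E) ^ (m + 1)
        + b * (1 - 1 / E) ^ (m + 1) * ((E - 2) / (E * (E - 1)))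
        + (b * (P / Q) / E ^ 3) * ((E ^ 2 - E + 1) * L - T + 1) := by
    rw [hpow1, hEpow]
    field_simp
    ring
  have hterm : 0 ≤ (b * (P / Q) / E ^ 3) * ((E ^ 2 - E + 1) * L - T + 1) := by
    apply mul_nonneg _ hg
    positivity
  constructor
  · rw [hlogbe, key]
    linarith
  · 
    -- need : b - c + c*k ≥ b*(1/E - 1/E^2) where c = b*(1-1/E)^(m+1)
    have hq1 : 0 ≤ 1 - 1 / E := by
      have : 1 / E < 1 := by
        rw [div_lt_one hE0]; linarith
      linarith
    have hqle : (1 - 1 / E) ^ (m + 1) ≤ (1 - 1 / E) := by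
      calc (1 - 1 / E) ^ (m + 1) ≤ (1 - 1 / E) ^ 1 :=
        pow_le_pow_of_le_one hq1 (by
          have : 0 < 1 / E := by positivity
          linarith) (by omega)
      _ = 1 - 1 / E := pow_one _
    have hkpos : 0 < 1 - (E - 2) / (E * (E - 1)) := by
      rw [sub_pos, div_lt_one (mul_pos hE0 (by linarith))]
      nlinarith [sq_nonneg (E - 1)]
    have hcle : b * (1 - 1 / E) ^ (m + 1) * (1 - (E - 2) / (E * (E - 1)))
        ≤ b * (1 - 1 / E) * (1 - (E - 2) / (E * (E - 1))) := by
      apply mul_le_mul_of_nonneg_right _ hkpos.le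
      exact mul_le_mul_of_nonneg_left hqle hb.le
    have halg : b - b * (1 - 1 / E) * (1 - (E - 2) / (E * (E - 1)))
        = 2 * b * (E - 1) / E ^ 2 := by
      field_simp
      ring
    have heq : b * (1 / E - 1 / E ^ 2) = b * (E - 1) / E ^ 2 := by
      field_simp
    have hfin : b * (1 / E - 1 / E ^ 2) ≤ b - b * (1 - 1 / E) * (1 - (E - 2) / (E * (E - 1))) := by
      rw [halg, heq]
      have h2 : (0:ℝ) < E ^ 2 := by positivity
      rw [div_le_div_iff₀ h2 h2]
      nlinarith [mul_pos hb h2]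
    nlinarith [hfin, hcle]
end
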